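/- Fix N∈ℕ, x,y∈ℤ, f:{0,…,N}→ℤ∪{∞} and g:{0,…,N}→ℤ∪{−∞} such that Ω(N,x,y,f,g) is nonempty. Suppose B,C ⊆ ℤ^{{0,…,N}} are either both increasing or both decreasing with respect to the coordinatewise partial order. Then P^{N,x,y,f,g}(L∈B∩C) ≥ P^{N,x,y,f,g}(L∈B) · P^{N,x,y,f,g}(L∈C). -/

import Mathlib

/-- A Bernoulli path on `{0,…,N}`: increments in `{0,1}`. -/
def IsBPath (N : ℕ) (L : Fin (N+1) → ℤ) : Prop :=
  ∀ j : Fin N, L j.succ = L j.castSucc ∨ L j.succ = L j.castSucc + 1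

/-- `Ω(N,x,y,f,g)`: Bernoulli paths from `x` to `y` staying below the barrier `f`
and above the barrier `g`. -/
def pathSetB (N : ℕ) (x y : ℤ) (f : Fin (N+1) → WithTop ℤ) (g : Fin (N+1) → WithBot ℤ) :
    Set (Fin (N+1) → ℤ) :=
  {L | IsBPath N L ∧ L 0 = x ∧ L (Fin.last N) = y ∧
    (∀ j, (L j : WithTop ℤ) ≤ f j) ∧ (∀ j, g j ≤ (L j : WithBot ℤ))}

/-- Probability of the event `A` under the uniform measure on the finite set `Ω`. -/
noncomputable def unifProb {X : Type*} (Ω A : Set X) : ℝ :=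
  ((Ω ∩ A).ncard : ℝ) / (Ω.ncard : ℝ)

/-!
The paths of `Ω(N,x,y,f,g)` form a finite sublattice of `ℤ^{0,…,N}`: the pointwise maximum and
minimum of two Bernoulli paths with the same endpoints are again such paths and respect the same
barriers. For upper sets `B`, `C` in a finite sublattice `Ω`, the sups of `Ω ∩ B` and `Ω ∩ C` lie
in `Ω ∩ B ∩ C` and their infs lie in `Ω`, so the Ahlswede–Daykin inequality
`#s * #t ≤ #(s ⊼ t) * #(s ⊻ t)` gives `#(Ω ∩ B) * #(Ω ∩ C) ≤ #Ω * #(Ω ∩ B ∩ C)`.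
Lower sets are upper sets of the order dual.
-/

open Finset
open scoped FinsetFamily

section Sublattice

variable {α : Type*} [DistribLattice α] {Ω B C : Set α}

theorem Set.Finite.ncard_inter_mul_ncard_inter_le_of_isUpperSet (hΩ : Ω.Finite)
    (hsup : SupClosed Ω) (hinf : InfClosed Ω) (hB : IsUpperSet B) (hC : IsUpperSet C) :
    (Ω ∩ B).ncard * (Ω ∩ C).ncard ≤ Ω.ncard * (Ω ∩ (B ∩ C)).ncard := by
  classical
  lift Ω to Finset α using hΩ
  have hcard : ∀ (S : Set α) [DecidablePred (· ∈ S)],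
      ((Ω : Set α) ∩ S).ncard = #(Ω.filter (· ∈ S)) := fun S _ => by
    rw [← Set.ncard_coe_finset, coe_filter]; rfl
  simp only [hcard, Set.ncard_coe_finset]
  have hsups : Ω.filter (· ∈ B) ⊻ Ω.filter (· ∈ C) ⊆ Ω.filter (· ∈ B ∩ C) := by
    simp only [Finset.sups_subset_iff, mem_filter]
    exact fun a ha b hb => ⟨hsup ha.1 hb.1, hB le_sup_left ha.2, hC le_sup_right hb.2⟩
  have hinfs : Ω.filter (· ∈ B) ⊼ Ω.filter (· ∈ C) ⊆ Ω := by
    simp only [Finset.infs_subset_iff, mem_filter]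
    exact fun a ha b hb => hinf ha.1 hb.1
  exact (le_card_infs_mul_card_sups _ _).trans
    (Nat.mul_le_mul (Finset.card_le_card hinfs) (Finset.card_le_card hsups))

theorem Set.Finite.ncard_inter_mul_ncard_inter_le_of_isLowerSet (hΩ : Ω.Finite)
    (hsup : SupClosed Ω) (hinf : InfClosed Ω) (hB : IsLowerSet B) (hC : IsLowerSet C) :
    (Ω ∩ B).ncard * (Ω ∩ C).ncard ≤ Ω.ncard * (Ω ∩ (B ∩ C)).ncard :=
  Set.Finite.ncard_inter_mul_ncard_inter_le_of_isUpperSet (α := αᵒᵈ) hΩ hinf hsup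
    hB.toDual hC.toDual

end Sublattice

theorem unifProb_mul_le_unifProb_inter {X : Type*} {Ω B C : Set X}
    (h : (Ω ∩ B).ncard * (Ω ∩ C).ncard ≤ Ω.ncard * (Ω ∩ (B ∩ C)).ncard) :
    unifProb Ω B * unifProb Ω C ≤ unifProb Ω (B ∩ C) := by
  unfold unifProb
  rcases Nat.eq_zero_or_pos Ω.ncard with hΩ | hΩ
  · simp [hΩ]
  rw [div_mul_div_comm, div_le_div_iff₀ (by positivity) (by exact_mod_cast hΩ)]
  have h' : ((Ω ∩ B).ncard : ℝ) * (Ω ∩ C).ncard ≤ Ω.ncard * (Ω ∩ (B ∩ C)).ncard := by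
    exact_mod_cast h
  nlinarith

section BernoulliPaths

variable {N : ℕ} {x y : ℤ} {f : Fin (N+1) → WithTop ℤ} {g : Fin (N+1) → WithBot ℤ}

theorem IsBPath.monotone {L : Fin (N+1) → ℤ} (hL : IsBPath N L) : Monotone L :=
  Fin.monotone_iff_le_succ.mpr fun j => by rcases hL j with h | h <;> omega

theorem pathSetB_subset_Icc : pathSetB N x y f g ⊆ Set.Icc (fun _ => x) (fun _ => y) := by
  rintro L ⟨hL, hx, hy, -, -⟩
  exact ⟨fun j => hx ▸ hL.monotone (Fin.zero_le j), fun j => hy ▸ hL.monotone (Fin.le_last j)⟩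

theorem pathSetB_finite : (pathSetB N x y f g).Finite :=
  (Set.finite_Icc _ _).subset pathSetB_subset_Icc

theorem supClosed_pathSetB : SupClosed (pathSetB N x y f g) := by
  rintro L ⟨hL, hLx, hLy, hLf, hLg⟩ M ⟨hM, hMx, hMy, hMf, -⟩
  refine ⟨fun j => ?_, by simp [hLx, hMx], by simp [hLy, hMy], fun j => ?_, fun j => ?_⟩
  · rcases hL j with h | h <;> rcases hM j with h' | h' <;> simp only [Pi.sup_apply] <;> omega
  · simpa only [Pi.sup_apply, WithTop.coe_max] using max_le (hLf j) (hMf j)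
  · simpa only [Pi.sup_apply, WithBot.coe_max] using le_max_of_le_left (hLg j)

theorem infClosed_pathSetB : InfClosed (pathSetB N x y f g) := by
  rintro L ⟨hL, hLx, hLy, hLf, hLg⟩ M ⟨hM, hMx, hMy, -, hMg⟩
  refine ⟨fun j => ?_, by simp [hLx, hMx], by simp [hLy, hMy], fun j => ?_, fun j => ?_⟩
  · rcases hL j with h | h <;> rcases hM j with h' | h' <;> simp only [Pi.inf_apply] <;> omega
  · simpa only [Pi.inf_apply, WithTop.coe_min] using min_le_of_left_le (hLf j)
  · simpa only [Pi.inf_apply, WithBot.coe_min] using le_min (hLg j) (hMg j)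

end BernoulliPaths

theorem stmt14_general (N : ℕ) (x y : ℤ)
    (f : Fin (N+1) → WithTop ℤ) (g : Fin (N+1) → WithBot ℤ)
    (B C : Set (Fin (N+1) → ℤ))
    (hBC : (IsUpperSet B ∧ IsUpperSet C) ∨ (IsLowerSet B ∧ IsLowerSet C)) :
    unifProb (pathSetB N x y f g) (B ∩ C) ≥
      unifProb (pathSetB N x y f g) B * unifProb (pathSetB N x y f g) C := by
  apply unifProb_mul_le_unifProb_inter
  rcases hBC with ⟨hB, hC⟩ | ⟨hB, hC⟩
  · exact pathSetB_finite.ncard_inter_mul_ncard_inter_le_of_isUpperSet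
      supClosed_pathSetB infClosed_pathSetB hB hC
  · exact pathSetB_finite.ncard_inter_mul_ncard_inter_le_of_isLowerSet
      supClosed_pathSetB infClosed_pathSetB hB hC

/-- Lemma 3.5 (FKG inequality for Bernoulli random walk bridges with barriers). -/
theorem stmt14 (N : ℕ) (x y : ℤ)
    (f : Fin (N+1) → WithTop ℤ) (g : Fin (N+1) → WithBot ℤ)
    (hne : (pathSetB N x y f g).Nonempty)
    (B C : Set (Fin (N+1) → ℤ))
    (hBC : (IsUpperSet B ∧ IsUpperSet C) ∨ (IsLowerSet B ∧ IsLowerSet C)) :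
    unifProb (pathSetB N x y f g) (B ∩ C) ≥
      unifProb (pathSetB N x y f g) B * unifProb (pathSetB N x y f g) C :=
  stmt14_general N x y f g B C hBC
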